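/- Let (G, γ, b) be a 4-edge-connected RES-graph, let γ' be a shifting of γ, and let X ∋ b be a vertex set. Then every collection of pairwise edge-disjoint non-zero circuits hitting b has size at most γ'(E(X)) + |δ(X)|/2. Consequently, if (X, γ') certifies the flooding number (i.e., equality in the min-max formula holds), then 2·ν̃(G, γ, b) ≥ the maximum number of edge-disjoint non-zero circuits hitting b. -/

import Mathlib

open scoped Classical

namespace SignedFlood

variable {V E : Type} [Fintype V] [DecidableEq V] [Fintype E] [DecidableEq E]

/-- A circuit (closed trail) in a multigraph specified by `ends : E → Sym2 V`.
Darts are triples `(e, u, v)` meaning edge `e` traversed from `u` to `v`. -/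
structure Circuit {V E : Type} (ends : E → Sym2 V) where
  darts : List (E × V × V)
  nonempty : darts ≠ []
  valid : ∀ d ∈ darts, ends d.1 = s(d.2.1, d.2.2)
  chain : darts.Chain' (fun d d' => d.2.2 = d'.2.1)
  closed : darts.head?.map (fun d => d.2.1) = darts.getLast?.map (fun d => d.2.2)
  edgesNodup : (darts.map Prod.fst).Nodup

namespace Circuit

variable {ends : E → Sym2 V}

/-- The set of edges used by a circuit. -/
def edges (C : Circuit ends) : Finset E := (C.darts.map Prod.fst).toFinset

/-- The weight of a circuit: the sum in `ZMod 2` of the weights of its edges. -/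
def weight (γ : E → ZMod 2) (C : Circuit ends) : ZMod 2 :=
  ((C.darts.map Prod.fst).map γ).sum

/-- A circuit hits `b` if it has an edge (dart) incident to `b`. -/
def Hits (C : Circuit ends) (b : V) : Prop :=
  ∃ d ∈ C.darts, d.2.1 = b ∨ d.2.2 = b

/-- A circuit has `b` as its tail and head. -/
def BasedAt (C : Circuit ends) (b : V) : Prop :=
  C.darts.head?.map (fun d => d.2.1) = some b

end Circuit

/-- Degree of a vertex: loops count twice. -/
noncomputable def degree (ends : E → Sym2 V) (v : V) : ℕ :=
  ∑ e : E, (if ends e = s(v, v) then 2 else if v ∈ ends e then 1 else 0)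

/-- Adjacency via some edge. -/
def Adj (ends : E → Sym2 V) (u v : V) : Prop := ∃ e, ends e = s(u, v)

/-- The multigraph is connected. -/
def Connected (ends : E → Sym2 V) : Prop :=
  ∀ u v : V, Relation.ReflTransGen (Adj ends) u v

/-- Eulerian: connected with all degrees even. -/
def IsEulerian (ends : E → Sym2 V) : Prop :=
  Connected ends ∧ ∀ v : V, Even (degree ends v)

/-- A family of circuits whose edge sets partition the edge set. -/
def IsDecomposition (ends : E → Sym2 V) {k : ℕ} (C : Fin k → Circuit ends) : Prop :=
  ∀ e : E, ∃! i : Fin k, e ∈ (C i).edges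

/-- The flooding number: the maximum size of a circuit-decomposition where each
circuit is non-zero and hits `b` (`0` if there is no such decomposition). -/
noncomputable def floodingNumber (ends : E → Sym2 V) (γ : E → ZMod 2) (b : V) : ℕ :=
  sSup {k : ℕ | ∃ C : Fin k → Circuit ends, IsDecomposition ends C ∧
    ∀ i, (C i).weight γ = 1 ∧ (C i).Hits b}

/-- Shift a signature at a vertex `v`: add `1` to every non-loop edge incident to `v`. -/
noncomputable def shiftAt (ends : E → Sym2 V) (γ : E → ZMod 2) (v : V) : E → ZMod 2 :=
  fun e => γ e + (if v ∈ ends e ∧ ends e ≠ s(v, v) then 1 else 0)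

/-- `γ'` is a shifting of `γ`: obtained by a sequence of shifts at vertices. -/
noncomputable def IsShifting (ends : E → Sym2 V) (γ γ' : E → ZMod 2) : Prop :=
  ∃ l : List V, γ' = l.foldl (shiftAt ends) γ

/-- A pair crosses `X` if it has exactly one member in `X`. -/
def Crossing (X : Set V) (p : Sym2 V) : Prop :=
  ∃ u v, p = s(u, v) ∧ u ∈ X ∧ v ∉ X

/-- `δ(X)`: edges with exactly one end in `X`. -/
noncomputable def cutEdges (ends : E → Sym2 V) (X : Set V) : Finset E :=
  Finset.univ.filter (fun e => Crossing X (ends e))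

/-- `E(X)`: edges with both ends in `X`. -/
noncomputable def insideEdges (ends : E → Sym2 V) (X : Set V) : Finset E :=
  Finset.univ.filter (fun e => ∀ v ∈ ends e, v ∈ X)

/-- `E(Y) ∪ δ(Y)`: edges with at least one end in `Y`. -/
noncomputable def incidentEdges (ends : E → Sym2 V) (Y : Set V) : Finset E :=
  Finset.univ.filter (fun e => ∃ v ∈ ends e, v ∈ Y)

/-- The number of non-zero edges in `F` according to `γ`. -/
noncomputable def nzCount (γ : E → ZMod 2) (F : Finset E) : ℕ :=
  (F.filter (fun e => γ e = 1)).card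

/-- `Y` is `γ`-odd: parity of `γ(E(Y) ∪ δ(Y))` differs from parity of `|δ(Y)|/2`. -/
def OddSet (ends : E → Sym2 V) (γ : E → ZMod 2) (Y : Set V) : Prop :=
  nzCount γ (incidentEdges ends Y) % 2 ≠ ((cutEdges ends Y).card / 2) % 2

/-- The vertex set of the component of `G - X` containing `y`. -/
def compOf (ends : E → Sym2 V) (X : Set V) (y : V) : Set V :=
  {z | Relation.ReflTransGen
    (fun a c => (∃ e, ends e = s(a, c)) ∧ a ∉ X ∧ c ∉ X) y z}

/-- `Y` is the vertex set of a component of `G - X`. -/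
def IsCompOf (ends : E → Sym2 V) (X : Set V) (Y : Set V) : Prop :=
  ∃ y, y ∉ X ∧ Y = compOf ends X y

/-- The number of `γ`-odd components of `G - X`. -/
noncomputable def oddComponents (ends : E → Sym2 V) (γ : E → ZMod 2) (X : Set V) : ℕ :=
  Set.ncard {Y : Set V | IsCompOf ends X Y ∧ OddSet ends γ Y}

/-- A flooding: a circuit-decomposition into `deg(b)/2` circuits, each with `b`
as tail and head. -/
def IsFlooding (ends : E → Sym2 V) (b : V) {k : ℕ} (C : Fin k → Circuit ends) : Prop :=
  k = degree ends b / 2 ∧ IsDecomposition ends C ∧ ∀ i, (C i).BasedAt b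

/-- The number of non-zero circuits in a family of circuits. -/
noncomputable def nonzeroCount (ends : E → Sym2 V) (γ : E → ZMod 2) {k : ℕ}
    (C : Fin k → Circuit ends) : ℕ :=
  (Finset.univ.filter (fun i : Fin k => (C i).weight γ = 1)).card

/-- An optimal flooding maximizes the number of non-zero circuits. -/
def IsOptimalFlooding (ends : E → Sym2 V) (γ : E → ZMod 2) (b : V) {k : ℕ}
    (C : Fin k → Circuit ends) : Prop :=
  IsFlooding ends b C ∧ ∀ (k' : ℕ) (C' : Fin k' → Circuit ends),
    IsFlooding ends b C' → nonzeroCount ends γ C' ≤ nonzeroCount ends γ C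

end SignedFlood

/-!
Shifting at a vertex `v` changes the weight of a circuit by the number of its dart ends at `v`,
which is even, so `γ` and `γ'` give circuits the same weight. A `γ'`-non-zero circuit through
`b ∈ X` that never crosses `δ(X)` stays in `X` and so contains a non-zero edge of `E(X)`; one that
does cross it crosses an even, hence at least two, number of times. In an edge-disjoint packing
each circuit is thus charged a non-zero edge of `E(X)` or two edges of `δ(X)`.

For the second bound, the cut of a component of `G - X` is even (handshake), non-empty
(connectivity) and, as the component avoids `b`, not of size two; these cuts are disjoint and lie
in `δ(X)`, so `4 · odd_{γ'}(G - X) ≤ |δ(X)|`, and then the certificate equation gives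
`2 ν̃ ≥ γ'(E(X)) + |δ(X)|/2`.
-/

theorem List.map_cons_eq_map_append_of_isChain {α β : Type*} (f g : α → β) :
    ∀ (a : α) (l : List α), (a :: l).IsChain (fun x y => g x = f y) →
      (a :: l).map g = l.map f ++ [g ((a :: l).getLast (List.cons_ne_nil a l))]
  | _, [], _ => rfl
  | a, b :: l, h => by
    rw [List.isChain_cons_cons] at h
    rw [List.map_cons, List.map_cons_eq_map_append_of_isChain f g b l h.2, h.1,
      List.getLast_cons (List.cons_ne_nil b l)]
    rfl

theorem Finset.sum_card_inter_le_of_pairwise_disjoint {ι α : Type*} [Fintype ι] [DecidableEq α]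
    {f : ι → Finset α} (hf : Pairwise fun i j => Disjoint (f i) (f j)) (A : Finset α) :
    ∑ i, (f i ∩ A).card ≤ A.card := by
  rw [← Finset.card_biUnion fun i _ j _ hij =>
    (hf hij).mono Finset.inter_subset_left Finset.inter_subset_left]
  exact Finset.card_le_card (Finset.biUnion_subset.mpr fun _ _ => Finset.inter_subset_right)

theorem Finset.card_le_card_add_card_div_two {ι α : Type*} [Fintype ι] [DecidableEq α]
    {f : ι → Finset α} (hf : Pairwise fun i j => Disjoint (f i) (f j)) (A B : Finset α)
    (h : ∀ i, (∃ a ∈ f i, a ∈ A) ∨ 2 ≤ (f i ∩ B).card) :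
    Fintype.card ι ≤ A.card + B.card / 2 := by
  have hi : ∀ i, 2 ≤ 2 * (f i ∩ A).card + (f i ∩ B).card := fun i => by
    rcases h i with ⟨a, ha, haA⟩ | h
    · have hpos := Finset.card_pos.mpr ⟨a, Finset.mem_inter.mpr ⟨ha, haA⟩⟩
      omega
    · omega
  have hsum := Finset.sum_le_sum fun i (_ : i ∈ Finset.univ) => hi i
  rw [Finset.sum_const, Finset.card_univ, smul_eq_mul, Finset.sum_add_distrib,
    ← Finset.mul_sum] at hsum
  have hA := Finset.sum_card_inter_le_of_pairwise_disjoint hf A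
  have hB := Finset.sum_card_inter_le_of_pairwise_disjoint hf B
  omega

namespace SignedFlood

variable {V E : Type}

section

variable {ends : E → Sym2 V}

lemma crossing_mk_iff {X : Set V} {u w : V} : Crossing X s(u, w) ↔ (u ∈ X ↔ w ∉ X) := by
  constructor
  · rintro ⟨a, c, h, ha, hc⟩
    rcases Sym2.eq_iff.mp h with ⟨rfl, rfl⟩ | ⟨rfl, rfl⟩ <;> tauto
  · intro h
    by_cases hu : u ∈ X
    · exact ⟨u, w, rfl, hu, h.mp hu⟩
    · exact ⟨w, u, Sym2.eq_swap, by tauto, hu⟩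

lemma shiftAt_apply_of_ends_eq [DecidableEq V] (γ : E → ZMod 2) (v : V) {e : E} {u w : V}
    (he : ends e = s(u, w)) :
    shiftAt ends γ v e = γ e + ((if u = v then 1 else 0) + (if w = v then 1 else 0)) := by
  rw [shiftAt, he]
  congr 1
  by_cases hu : u = v <;> by_cases hw : w = v <;> subst_vars <;>
    simp [Ne.symm, CharTwo.add_self_eq_zero, *]

namespace Circuit

lemma map_head_perm_map_tail (C : Circuit ends) :
    (C.darts.map (·.2.2)).Perm (C.darts.map (·.2.1)) := by
  obtain ⟨a, l, hal⟩ := List.exists_cons_of_ne_nil C.nonempty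
  have hchain := C.chain
  have hclosed := C.closed
  rw [hal] at hchain hclosed ⊢
  rw [List.getLast?_eq_some_getLast (List.cons_ne_nil a l)] at hclosed
  have hlast : ((a :: l).getLast (List.cons_ne_nil a l)).2.2 = a.2.1 :=
    (Option.some_injective _ hclosed).symm
  rw [List.map_cons_eq_map_append_of_isChain _ _ a l hchain, hlast, List.map_cons]
  exact List.perm_append_singleton _ _

lemma sum_map_head_eq_sum_map_tail {M : Type*} [AddCommMonoid M] (C : Circuit ends)
    (f : V → M) : (C.darts.map (f ·.2.2)).sum = (C.darts.map (f ·.2.1)).sum := by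
  simpa [List.map_map, Function.comp_def] using (C.map_head_perm_map_tail.map f).sum_eq

lemma sum_edges [DecidableEq E] {M : Type*} [AddCommMonoid M] (C : Circuit ends)
    (g : E → M) : ∑ e ∈ C.edges, g e = (C.darts.map (g ·.1)).sum := by
  rw [edges, List.sum_toFinset _ C.edgesNodup, List.map_map]
  rfl

lemma weight_eq_sum [DecidableEq E] (γ : E → ZMod 2) (C : Circuit ends) :
    C.weight γ = ∑ e ∈ C.edges, γ e := by
  rw [sum_edges, weight, List.map_map]
  rfl

lemma sum_edges_eq_zero_of_coboundary [DecidableEq E] (C : Circuit ends) {g : E → ZMod 2}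
    (f : V → ZMod 2) (hg : ∀ e u w, ends e = s(u, w) → g e = f u + f w) :
    ∑ e ∈ C.edges, g e = 0 := by
  rw [sum_edges, List.map_congr_left fun d hd => hg d.1 _ _ (C.valid d hd), List.sum_map_add,
    sum_map_head_eq_sum_map_tail]
  exact CharTwo.add_self_eq_zero _

lemma weight_shiftAt [DecidableEq V] [DecidableEq E] (C : Circuit ends) (γ : E → ZMod 2)
    (v : V) : C.weight (shiftAt ends γ v) = C.weight γ := by
  have hshift : ∑ e ∈ C.edges, (shiftAt ends γ v e - γ e) = 0 :=
    C.sum_edges_eq_zero_of_coboundary (fun x => if x = v then 1 else 0) fun e u w he => by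
      rw [shiftAt_apply_of_ends_eq γ v he]
      ring
  rw [weight_eq_sum, weight_eq_sum, ← sub_eq_zero, ← Finset.sum_sub_distrib, hshift]

lemma weight_eq_of_isShifting [DecidableEq V] [DecidableEq E] (C : Circuit ends)
    {γ γ' : E → ZMod 2} (h : IsShifting ends γ γ') : C.weight γ' = C.weight γ := by
  obtain ⟨l, rfl⟩ := h
  induction l generalizing γ with
  | nil => rfl
  | cons v l ih => rw [List.foldl_cons, ih, weight_shiftAt]

lemma even_card_edges_inter_cutEdges [Fintype E] [DecidableEq E] (C : Circuit ends)
    (X : Set V) : Even (C.edges ∩ cutEdges ends X).card := by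
  rw [← ZMod.natCast_eq_zero_iff_even, ← Finset.filter_mem_eq_inter, ← Finset.sum_boole]
  refine C.sum_edges_eq_zero_of_coboundary (fun x => if x ∈ X then 1 else 0) fun e u w he => ?_
  simp only [cutEdges, Finset.mem_filter, Finset.mem_univ, true_and, he, crossing_mk_iff]
  by_cases hu : u ∈ X <;> by_cases hw : w ∈ X <;> simp [hu, hw, CharTwo.add_self_eq_zero]

lemma tail_mem_of_forall_tail_mem_iff_head_mem (C : Circuit ends) {X : Set V}
    (hX : ∀ d ∈ C.darts, (d.2.1 ∈ X ↔ d.2.2 ∈ X)) {d₀ : E × V × V} (hd₀ : d₀ ∈ C.darts)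
    (h₀ : d₀.2.1 ∈ X) : ∀ d ∈ C.darts, d.2.1 ∈ X := by
  set a := C.darts.head C.nonempty
  have hconst : ∀ d ∈ C.darts, (d.2.1 ∈ X ↔ a.2.1 ∈ X) :=
    (List.IsChain.iff_mem.mp C.chain).induction _ _
      (fun _ _ ⟨hx, _, hxy⟩ hpx => hxy ▸ (hX _ hx).symm.trans hpx) fun _ => Iff.rfl
  exact fun d hd => (hconst d hd).mpr ((hconst d₀ hd₀).mp h₀)

lemma edges_subset_insideEdges [Fintype V] [DecidableEq V] [Fintype E] [DecidableEq E]
    (C : Circuit ends) {X : Set V} {b : V} (hb : b ∈ X) (hC : C.Hits b)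
    (hcut : Disjoint C.edges (cutEdges ends X)) : C.edges ⊆ insideEdges ends X := by
  have hdart : ∀ d ∈ C.darts, d.1 ∈ C.edges := fun d hd =>
    List.mem_toFinset.mpr (List.mem_map_of_mem hd)
  have hX : ∀ d ∈ C.darts, (d.2.1 ∈ X ↔ d.2.2 ∈ X) := by
    intro d hd
    have hd' : d.1 ∉ cutEdges ends X := Finset.disjoint_left.mp hcut (hdart d hd)
    simp only [cutEdges, Finset.mem_filter, Finset.mem_univ, true_and, C.valid d hd,
      crossing_mk_iff] at hd'
    tauto
  obtain ⟨d₀, hd₀, hbd₀⟩ := hC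
  have htail := C.tail_mem_of_forall_tail_mem_iff_head_mem hX hd₀ <| by
    rcases hbd₀ with h | h
    · exact h ▸ hb
    · exact (hX d₀ hd₀).mpr (h ▸ hb)
  intro e he
  obtain ⟨d, hd, rfl⟩ := List.mem_map.mp (List.mem_toFinset.mp he)
  simp only [insideEdges, Finset.mem_filter, Finset.mem_univ, true_and, C.valid d hd,
    Sym2.mem_iff]
  rintro v (rfl | rfl)
  exacts [htail d hd, (hX d hd).mp (htail d hd)]

lemma exists_nonzero_insideEdges_or_two_le_card_cutEdges [Fintype V] [DecidableEq V]
    [Fintype E] [DecidableEq E] (C : Circuit ends) {γ : E → ZMod 2} {X : Set V} {b : V}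
    (hb : b ∈ X) (hγ : C.weight γ = 1) (hC : C.Hits b) :
    (∃ e ∈ C.edges, e ∈ insideEdges ends X ∧ γ e = 1) ∨
      2 ≤ (C.edges ∩ cutEdges ends X).card := by
  by_cases hcut : Disjoint C.edges (cutEdges ends X)
  · left
    rw [weight_eq_sum] at hγ
    obtain ⟨e, he, hne⟩ := Finset.exists_ne_zero_of_sum_ne_zero (hγ ▸ one_ne_zero)
    exact ⟨e, he, C.edges_subset_insideEdges hb hC hcut he, Fin.eq_one_of_ne_zero _ hne⟩
  · right
    rw [Finset.not_disjoint_iff_nonempty_inter] at hcut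
    obtain ⟨k, hk⟩ := C.even_card_edges_inter_cutEdges X
    have hpos := hcut.card_pos
    omega

end Circuit

lemma card_packing_le [Fintype V] [DecidableEq V] [Fintype E] [DecidableEq E] {ι : Type*}
    [Fintype ι] {γ γ' : E → ZMod 2} (hsh : IsShifting ends γ γ') {X : Set V} {b : V}
    (hb : b ∈ X) (D : ι → Circuit ends)
    (hdisj : Pairwise fun i j => Disjoint (D i).edges (D j).edges)
    (hD : ∀ i, (D i).weight γ = 1 ∧ (D i).Hits b) :
    Fintype.card ι ≤ nzCount γ' (insideEdges ends X) + (cutEdges ends X).card / 2 := by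
  refine Finset.card_le_card_add_card_div_two hdisj _ _ fun i => ?_
  have hγ' := ((D i).weight_eq_of_isShifting hsh).trans (hD i).1
  refine ((D i).exists_nonzero_insideEdges_or_two_le_card_cutEdges hb hγ' (hD i).2).imp_left ?_
  rintro ⟨e, he, hin, hne⟩
  exact ⟨e, he, Finset.mem_filter.mpr ⟨hin, hne⟩⟩

lemma sum_degree_summand_eq [Fintype V] [DecidableEq V] (Y : Set V) (z : Sym2 V) :
    ∑ v ∈ Y.toFinset, (if z = s(v, v) then 2 else if v ∈ z then 1 else 0) =
      2 * (if ∀ v ∈ z, v ∈ Y then 1 else 0) + (if Crossing Y z then 1 else 0) := by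
  induction z using Sym2.ind with
  | h u w =>
    have hsummand : ∀ v, (if s(u, w) = s(v, v) then 2 else if v ∈ s(u, w) then 1 else 0) =
        (if u = v then 1 else 0) + (if w = v then 1 else 0) := fun v => by
      by_cases hu : u = v <;> by_cases hw : w = v <;> subst_vars <;> simp [Ne.symm, *]
    rw [Finset.sum_congr rfl fun v _ => hsummand v, Finset.sum_add_distrib, Finset.sum_ite_eq,
      Finset.sum_ite_eq]
    simp only [Set.mem_toFinset, Sym2.mem_iff, crossing_mk_iff]
    by_cases hu : u ∈ Y <;> by_cases hw : w ∈ Y <;> simp [hu, hw]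

lemma sum_degree_eq [Fintype V] [DecidableEq V] [Fintype E] (Y : Set V) :
    ∑ v ∈ Y.toFinset, degree ends v = 2 * (insideEdges ends Y).card + (cutEdges ends Y).card := by
  simp only [degree]
  rw [Finset.sum_comm]
  simp only [sum_degree_summand_eq, Finset.sum_add_distrib, ← Finset.mul_sum, insideEdges,
    cutEdges, Finset.card_filter]

lemma even_card_cutEdges [Fintype V] [DecidableEq V] [Fintype E]
    (hdeg : ∀ v, Even (degree ends v)) (Y : Set V) : Even (cutEdges ends Y).card := by
  have : Even (∑ v ∈ Y.toFinset, degree ends v) := Finset.even_sum _ fun v _ => hdeg v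
  rw [sum_degree_eq] at this
  simpa [Nat.even_add] using this

section Components

variable {X : Set V}

lemma notMem_of_mem_compOf {y z : V} (hy : y ∉ X) (hz : z ∈ compOf ends X y) : z ∉ X := by
  induction hz with
  | refl => exact hy
  | tail _ h => exact h.2.2

lemma mem_compOf_of_ends_eq {y u w : V} {e : E} (hy : y ∉ X) (hu : u ∈ compOf ends X y)
    (hw : w ∉ X) (he : ends e = s(u, w)) : w ∈ compOf ends X y :=
  hu.tail ⟨⟨e, he⟩, notMem_of_mem_compOf hy hu, hw⟩

lemma compOf_eq_of_mem {y z : V} (hz : z ∈ compOf ends X y) :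
    compOf ends X z = compOf ends X y := by
  have hzy : y ∈ compOf ends X z :=
    Relation.ReflTransGen.mono (fun _ _ ⟨⟨e, he⟩, hc, ha⟩ => ⟨⟨e, he.trans Sym2.eq_swap⟩, ha, hc⟩)
      _ _ hz.swap
  ext w
  exact ⟨Relation.ReflTransGen.trans hz, Relation.ReflTransGen.trans hzy⟩

namespace IsCompOf

variable {Y : Set V}

lemma notMem_of_mem (hY : IsCompOf ends X Y) {v : V} (hv : v ∈ X) : v ∉ Y := by
  obtain ⟨y, hy, rfl⟩ := hY
  exact fun h => notMem_of_mem_compOf hy h hv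

lemma cutEdges_subset [Fintype E] (hY : IsCompOf ends X Y) :
    cutEdges ends Y ⊆ cutEdges ends X := by
  obtain ⟨y, hy, rfl⟩ := hY
  intro e he
  simp only [cutEdges, Finset.mem_filter, Finset.mem_univ, true_and] at he ⊢
  obtain ⟨u, w, huw, hu, hw⟩ := he
  refine ⟨w, u, huw.trans Sym2.eq_swap, ?_, notMem_of_mem_compOf hy hu⟩
  by_contra hwX
  exact hw (mem_compOf_of_ends_eq hy hu hwX huw)

lemma cutEdges_nonempty [Fintype E] (hconn : Connected ends) {b : V} (hb : b ∈ X)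
    (hY : IsCompOf ends X Y) : (cutEdges ends Y).Nonempty := by
  by_contra hcut
  have hclosed : ∀ u w, u ∈ Y → Adj ends u w → w ∈ Y := by
    rintro u w hu ⟨e, he⟩
    by_contra hw
    exact hcut ⟨e, Finset.mem_filter.mpr ⟨Finset.mem_univ e, u, w, he, hu, hw⟩⟩
  obtain ⟨y, hy, rfl⟩ := hY
  have hreach : ∀ v, Relation.ReflTransGen (Adj ends) y v → v ∈ compOf ends X y := by
    intro v hv
    induction hv with
    | refl => exact Relation.ReflTransGen.refl
    | tail _ hadj ih => exact hclosed _ _ ih hadj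
  exact notMem_of_mem_compOf hy (hreach b (hconn y b)) hb

lemma disjoint_cutEdges [Fintype E] {Y' : Set V} (hY : IsCompOf ends X Y)
    (hY' : IsCompOf ends X Y') (hne : Y ≠ Y') : Disjoint (cutEdges ends Y) (cutEdges ends Y') := by
  obtain ⟨y, hy, rfl⟩ := hY
  obtain ⟨y', hy', rfl⟩ := hY'
  rw [Finset.disjoint_left]
  intro e he he'
  simp only [cutEdges, Finset.mem_filter, Finset.mem_univ, true_and] at he he'
  obtain ⟨u, w, huw, hu, hw⟩ := he
  obtain ⟨u', w', huw', hu', -⟩ := he'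
  have hwX : w ∈ X := by
    by_contra hwX
    exact hw (mem_compOf_of_ends_eq hy hu hwX huw)
  have hu'u : u' = u := by
    rcases Sym2.eq_iff.mp (huw'.symm.trans huw) with ⟨h, -⟩ | ⟨h, -⟩
    · exact h
    · exact absurd hwX (h ▸ notMem_of_mem_compOf hy' hu')
  subst hu'u
  exact hne ((compOf_eq_of_mem hu).symm.trans (compOf_eq_of_mem hu'))

lemma four_le_card_cutEdges [Fintype V] [DecidableEq V] [Fintype E] (hE : IsEulerian ends)
    {b : V} (h4 : ∀ Y : Set V, b ∉ Y → (cutEdges ends Y).card ≠ 2) (hb : b ∈ X)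
    (hY : IsCompOf ends X Y) : 4 ≤ (cutEdges ends Y).card := by
  obtain ⟨k, hk⟩ := even_card_cutEdges hE.2 Y
  have hpos := (hY.cutEdges_nonempty hE.1 hb).card_pos
  have hne := h4 Y (hY.notMem_of_mem hb)
  omega

end IsCompOf

lemma four_mul_ncard_isCompOf_le [Fintype V] [DecidableEq V] [Fintype E]
    (hE : IsEulerian ends) {b : V} (h4 : ∀ Y : Set V, b ∉ Y → (cutEdges ends Y).card ≠ 2)
    (hb : b ∈ X) : 4 * {Y | IsCompOf ends X Y}.ncard ≤ (cutEdges ends X).card := by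
  set 𝒞 := {Y | IsCompOf ends X Y}
  have hdisj : Pairwise fun Y Y' : 𝒞 => Disjoint (cutEdges ends Y) (cutEdges ends Y') :=
    fun Y Y' hne => Y.2.disjoint_cutEdges Y'.2 (Subtype.coe_ne_coe.mpr hne)
  calc 4 * 𝒞.ncard = ∑ _Y : 𝒞, 4 := by
        rw [Finset.sum_const, Finset.card_univ, smul_eq_mul, mul_comm, Set.fintypeCard_eq_ncard]
    _ ≤ ∑ Y : 𝒞, (cutEdges ends Y ∩ cutEdges ends X).card := Finset.sum_le_sum fun Y _ => by
        rw [Finset.inter_eq_left.mpr Y.2.cutEdges_subset]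
        exact Y.2.four_le_card_cutEdges hE h4 hb
    _ ≤ (cutEdges ends X).card := Finset.sum_card_inter_le_of_pairwise_disjoint hdisj _

lemma four_mul_oddComponents_le [Fintype V] [DecidableEq V] [Fintype E]
    (hE : IsEulerian ends) {b : V} (h4 : ∀ Y : Set V, b ∉ Y → (cutEdges ends Y).card ≠ 2)
    (hb : b ∈ X) (γ : E → ZMod 2) : 4 * oddComponents ends γ X ≤ (cutEdges ends X).card :=
  le_trans (Nat.mul_le_mul_left 4 (Set.ncard_le_ncard fun _ hY => hY.1))
    (four_mul_ncard_isCompOf_le hE h4 hb)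

end Components

end

variable [Fintype V] [DecidableEq V] [Fintype E] [DecidableEq E]

/-- any family of edge-disjoint non-zero circuits hitting `b` has size
at most `γ'(E(X)) + |δ(X)|/2`; consequently, if `(X, γ')` is a certificate then twice
the flooding number bounds the packing number. -/
theorem packing_upper_bound (ends : E → Sym2 V) (γ γ' : E → ZMod 2) (b : V)
    (hE : IsEulerian ends)
    (h4 : ∀ Y : Set V, b ∉ Y → (cutEdges ends Y).card ≠ 2)
    (hsh : IsShifting ends γ γ') (X : Set V) (hb : b ∈ X) :
    (∀ (ℓ : ℕ) (D : Fin ℓ → Circuit ends),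
      (∀ i j, i ≠ j → Disjoint (D i).edges (D j).edges) →
      (∀ i, (D i).weight γ = 1 ∧ (D i).Hits b) →
      ℓ ≤ nzCount γ' (insideEdges ends X) + (cutEdges ends X).card / 2) ∧
    ((floodingNumber ends γ b : ℤ) =
        (nzCount γ' (insideEdges ends X) : ℤ) + ((cutEdges ends X).card / 2 : ℕ)
          - (oddComponents ends γ' X : ℤ) →
      ∀ (ℓ : ℕ) (D : Fin ℓ → Circuit ends),
        (∀ i j, i ≠ j → Disjoint (D i).edges (D j).edges) →
        (∀ i, (D i).weight γ = 1 ∧ (D i).Hits b) →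
        ℓ ≤ 2 * floodingNumber ends γ b) := by
  refine ⟨fun ℓ D hdisj hD => ?_, fun hcert ℓ D hdisj hD => ?_⟩ <;>
    have hℓ := card_packing_le hsh hb D (fun i j => hdisj i j) hD <;>
    rw [Fintype.card_fin] at hℓ
  · exact hℓ
  · have hodd := four_mul_oddComponents_le hE h4 hb γ'
    omega

end SignedFlood
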